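/- Let L be a finite nonempty set of linear functionals on ℝⁿ with ℓ ∈ L ↔ -ℓ ∈ L such that B := {x | ℓ(x) ≤ 1 for all ℓ ∈ L} is bounded, and let h(x) := max_{ℓ ∈ L} ℓ(x) be the associated polyhedral norm. Let f ∈ ℝ[x₁,…,xₙ], X := {x ∈ ℝⁿ | f(x) = 0}, and assume ∇f(x) ≠ 0 for every x ∈ X (X is a smooth hypersurface). Suppose u ∈ ℝⁿ lies in the medial axis of X, i.e. there exist distinct points x, y ∈ X with h(u - x) = h(u - y) ≤ h(u - z) for all z ∈ X. Then, with λ := h(u - x) (which is > 0), there exist nonempty subsets A, A' ⊆ L such that: ℓ(u - x) = λ for all ℓ ∈ A and ℓ(u - x) ≤ λ for all ℓ ∈ L; ℓ'(u - y) = λ for all ℓ' ∈ A' and ℓ'(u - y) ≤ λ for all ℓ' ∈ L; ∇f(x) lies in the span of the vectors representing the functionals in A; and ∇f(y) lies in the span of the vectors representing the functionals in A'. In particular, (x, y, u, λ) satisfies the polynomial equidistance and tangency equations defining one of the incidence varieties V_{(F₁,F₂)}, so u lies in the equidistant locus V(I_Eq); hence the medial axis Med_h(X), and therefore its algebraic closure,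 is contained in the equidistant locus. -/

import Mathlib

/-!
Let `p ∈ X` be a closest point to `u`, `λ = h (u - p)`, and `A` the functionals of `L` attaining
`λ` at `u - p`. If `∇f(p)` were not in the span of `A`, duality would give `w` with `ℓ w = 0` for
`ℓ ∈ A` and `⟨∇f(p), w⟩ ≠ 0`; correcting `u - p` by a multiple of `w` gives a tangent vector `d`
of `X` at `p` with `ℓ d = λ` for every `ℓ ∈ A`. The implicit function theorem yields a curve in
`X` leaving `p` with velocity `d`, along which each active `ℓ (u - z)` decreases at rate `λ > 0`
while the inactive ones stay below `λ`; so `h (u - z) < λ`, contradicting minimality.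
Positivity of `λ` holds because `h` vanishes only at `0` (as `L = -L` and `B` is bounded) and
`u` cannot equal both `x ≠ y`.
-/

/-- The gradient of a multivariate polynomial `f` at a point `v`: the vector of
partial derivatives `pderiv i f` evaluated at `v`. -/
noncomputable def grad {n : ℕ} (f : MvPolynomial (Fin n) ℝ)
    (v : EuclideanSpace ℝ (Fin n)) : EuclideanSpace ℝ (Fin n) :=
  WithLp.toLp 2 fun i => MvPolynomial.eval (fun j => v j) (MvPolynomial.pderiv i f)

/-- The vector in `ℝⁿ` representing a linear functional `ℓ` (via the standard
inner product). -/
noncomputable def vecOf {n : ℕ} (ℓ : EuclideanSpace ℝ (Fin n) →ₗ[ℝ] ℝ) :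
    EuclideanSpace ℝ (Fin n) :=
  WithLp.toLp 2 fun i => ℓ (EuclideanSpace.single i 1)

open Filter Topology

namespace MvPolynomial

variable {σ : Type*} [Fintype σ]

noncomputable def evalFDeriv (p : MvPolynomial σ ℝ) (x : EuclideanSpace ℝ σ) :
    EuclideanSpace ℝ σ →L[ℝ] ℝ :=
  ∑ i, eval (fun j => x j) (pderiv i p) • EuclideanSpace.proj i

theorem evalFDeriv_apply (p : MvPolynomial σ ℝ) (x v : EuclideanSpace ℝ σ) :
    evalFDeriv p x v = ∑ i, eval (fun j => x j) (pderiv i p) * v i := by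
  simp [evalFDeriv]

theorem hasStrictFDerivAt_eval (p : MvPolynomial σ ℝ) (x : EuclideanSpace ℝ σ) :
    HasStrictFDerivAt (fun y : EuclideanSpace ℝ σ => eval (fun j => y j) p) (evalFDeriv p x) x := by
  classical
  induction p using MvPolynomial.induction_on with
  | C a =>
    refine (hasStrictFDerivAt_const a x).congr_of_eventuallyEq (.of_forall fun y => by simp)
      |>.congr_fderiv (ContinuousLinearMap.ext fun v => ?_)
    simp [evalFDeriv_apply]
  | add p q hp hq =>
    refine (hp.add hq).congr_of_eventuallyEq (.of_forall fun y => by simp)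
      |>.congr_fderiv (ContinuousLinearMap.ext fun v => ?_)
    simp [evalFDeriv_apply, add_mul, Finset.sum_add_distrib]
  | mul_X p i hp =>
    refine (hp.mul (EuclideanSpace.proj i : EuclideanSpace ℝ σ →L[ℝ] ℝ).hasStrictFDerivAt)
      |>.congr_of_eventuallyEq (.of_forall fun y => by simp)
      |>.congr_fderiv (ContinuousLinearMap.ext fun v => ?_)
    simp [evalFDeriv_apply, pderiv_X, add_mul, Finset.sum_add_distrib, Pi.single_apply,
      Finset.mul_sum, apply_ite, ite_mul, mul_assoc]

end MvPolynomial

theorem HasDerivAt.eventually_nhdsGT_lt_of_neg {φ : ℝ → ℝ} {c a : ℝ} (hφ : HasDerivAt φ c a)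
    (hc : c < 0) : ∀ᶠ t in 𝓝[>] a, φ t < φ a := by
  have hslope := (hasDerivAt_iff_tendsto_slope.mp hφ).mono_left
    (nhdsWithin_mono a fun t ht => ne_of_gt ht)
  filter_upwards [hslope.eventually (gt_mem_nhds hc), self_mem_nhdsWithin] with t hneg (ht : a < t)
  rw [slope_def_field, div_neg_iff] at hneg
  rcases hneg with ⟨-, h⟩ | ⟨h, -⟩ <;> linarith

theorem Finset.eventually_nhdsGT_sup'_lt {ι : Type*} {s : Finset ι} (hs : s.Nonempty)
    {φ : ι → ℝ → ℝ} {φ' : ι → ℝ} (hφ : ∀ i ∈ s, HasDerivAt (φ i) (φ' i) 0)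
    (hact : ∀ i ∈ s, φ i 0 = s.sup' hs (fun j => φ j 0) → φ' i < 0) :
    ∀ᶠ t in 𝓝[>] 0, s.sup' hs (fun i => φ i t) < s.sup' hs (fun i => φ i 0) := by
  simp_rw [Finset.sup'_lt_iff, Filter.eventually_all_finset]
  intro i hi
  rcases (Finset.le_sup' (fun j => φ j 0) hi).eq_or_lt with hmax | hlt
  · filter_upwards [(hφ i hi).eventually_nhdsGT_lt_of_neg (hact i hi hmax)] with t ht
    exact hmax ▸ ht
  · exact ((hφ i hi).continuousAt.eventually_lt_const hlt).filter_mono nhdsWithin_le_nhds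

theorem HasStrictFDerivAt.exists_curve_of_apply_eq_zero {E F : Type*} [NormedAddCommGroup E]
    [NormedSpace ℝ E] [CompleteSpace E] [NormedAddCommGroup F] [NormedSpace ℝ F]
    [FiniteDimensional ℝ F] {f : E → F} {f' : E →L[ℝ] F} {a : E} (hf : HasStrictFDerivAt f f' a)
    (hf' : f'.range = ⊤) {d : E} (hd : f' d = 0) :
    ∃ z : ℝ → E, z 0 = a ∧ HasDerivAt z d 0 ∧ ∀ᶠ t in 𝓝 0, f (z t) = f a := by
  let d' : f'.ker := ⟨d, hd⟩
  let g := hf.implicitFunction f f' hf' (f a)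
  have hline : HasStrictFDerivAt (fun t : ℝ => t • d') ((1 : ℝ →L[ℝ] ℝ).smulRight d') 0 :=
    ((1 : ℝ →L[ℝ] ℝ).smulRight d').hasStrictFDerivAt.congr_of_eventuallyEq
      (.of_forall fun t => by simp)
  refine ⟨fun t => g (t • d'), by simp [g], ?_, ?_⟩
  · have hg := hf.to_implicitFunction hf'
    rw [← zero_smul ℝ d'] at hg
    simpa using (hg.comp (0 : ℝ) hline).hasFDerivAt.hasDerivAt
  · have hlim : Tendsto (fun t : ℝ => (f a, t • d')) (𝓝 0) (𝓝 (f a, 0)) :=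
      (continuous_const.prodMk (continuous_id.smul continuous_const)).tendsto' 0 _ (by simp)
    exact hlim.eventually (hf.map_implicitFunction_eq hf')

section ActiveSet

variable {E : Type*} [AddCommGroup E] [Module ℝ E]

noncomputable def activeSet (L : Finset (E →ₗ[ℝ] ℝ)) (hL : L.Nonempty) (v : E) :
    Finset (E →ₗ[ℝ] ℝ) :=
  L.filter fun ℓ => ℓ v = L.sup' hL fun ℓ => ℓ v

theorem activeSet_nonempty (L : Finset (E →ₗ[ℝ] ℝ)) (hL : L.Nonempty) (v : E) :
    (activeSet L hL v).Nonempty := by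
  obtain ⟨ℓ, hℓ, hmax⟩ := L.exists_mem_eq_sup' hL fun ℓ => ℓ v
  exact ⟨ℓ, Finset.mem_filter.2 ⟨hℓ, hmax.symm⟩⟩

end ActiveSet

section Polyhedral

variable {E : Type*} [NormedAddCommGroup E] [NormedSpace ℝ E]

theorem eq_zero_of_forall_apply_eq_zero_of_isBounded {L : Finset (E →ₗ[ℝ] ℝ)}
    (hbdd : Bornology.IsBounded {x | ∀ ℓ ∈ L, ℓ x ≤ 1}) {v : E} (hv : ∀ ℓ ∈ L, ℓ v = 0) : v = 0 := by
  obtain ⟨C, hC⟩ := isBounded_iff_forall_norm_le.mp hbdd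
  have hline : ∀ t : ℝ, ‖t • v‖ ≤ C := fun t => hC _ fun ℓ hℓ => by simp [hv ℓ hℓ]
  by_contra hv0
  have hnorm : 0 < ‖v‖ := norm_pos_iff.2 hv0
  have hC0 : 0 ≤ C := (norm_nonneg _).trans (hline 0)
  have := hline ((C + 1) / ‖v‖)
  rw [norm_smul, Real.norm_of_nonneg (by positivity), div_mul_cancel₀ _ hnorm.ne'] at this
  linarith

theorem eq_zero_of_sup'_nonpos {L : Finset (E →ₗ[ℝ] ℝ)} (hL : L.Nonempty)
    (hsymm : ∀ ℓ, ℓ ∈ L ↔ -ℓ ∈ L) (hbdd : Bornology.IsBounded {x | ∀ ℓ ∈ L, ℓ x ≤ 1}) {v : E}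
    (hv : L.sup' hL (fun ℓ => ℓ v) ≤ 0) : v = 0 := by
  rw [Finset.sup'_le_iff] at hv
  refine eq_zero_of_forall_apply_eq_zero_of_isBounded hbdd fun ℓ hℓ => ?_
  have hneg : -ℓ v ≤ 0 := hv (-ℓ) ((hsymm ℓ).mp hℓ)
  linarith [hv ℓ hℓ]

theorem mem_span_activeSet_of_isLocalMinOn [FiniteDimensional ℝ E] {L : Finset (E →ₗ[ℝ] ℝ)}
    (hL : L.Nonempty) {F : E → ℝ} {D : E →L[ℝ] ℝ} {u p : E} (hF : HasStrictFDerivAt F D p)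
    (hD : D ≠ 0) (hpos : 0 < L.sup' hL fun ℓ => ℓ (u - p))
    (hmin : IsLocalMinOn (fun z => L.sup' hL fun ℓ => ℓ (u - z)) {z | F z = F p} p) :
    (D : E →ₗ[ℝ] ℝ) ∈ Submodule.span ℝ (activeSet L hL (u - p) : Set (E →ₗ[ℝ] ℝ)) := by
  set A := activeSet L hL (u - p)
  set lam := L.sup' hL fun ℓ => ℓ (u - p)
  rw [← Subtype.range_coe (s := (A : Set (E →ₗ[ℝ] ℝ)))]
  refine mem_span_of_iInf_ker_le_ker fun w hw => ?_
  have hwA : ∀ ℓ ∈ A, ℓ w = 0 := fun ℓ hℓ => (Submodule.mem_iInf _).1 hw ⟨ℓ, hℓ⟩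
  rw [LinearMap.mem_ker, ContinuousLinearMap.coe_coe]
  by_contra hDw
  set d := (u - p) - (D (u - p) / D w) • w
  have hDd : D d = 0 := by simp [d, hDw]
  have hAd : ∀ ℓ ∈ A, ℓ d = lam := fun ℓ hℓ => by
    simp [d, hwA ℓ hℓ, (Finset.mem_filter.1 hℓ).2, lam]
  have hsurj : D.range = ⊤ :=
    Module.Dual.range_eq_top_of_ne_zero fun h => hD (ContinuousLinearMap.coe_injective h)
  obtain ⟨z, hz0, hzd, hzF⟩ := hF.exists_curve_of_apply_eq_zero hsurj hDd
  have hderiv : ∀ ℓ : E →ₗ[ℝ] ℝ, HasDerivAt (fun t => ℓ (u - z t)) (-ℓ d) 0 := fun ℓ => by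
    simpa [Function.comp_def] using
      (LinearMap.toContinuousLinearMap ℓ).hasFDerivAt.comp_hasDerivAt (0 : ℝ) (hzd.const_sub u)
  have hdesc := L.eventually_nhdsGT_sup'_lt hL (φ := fun ℓ t => ℓ (u - z t))
    (fun ℓ _ => hderiv ℓ) fun ℓ hℓ hact => by
      rw [hAd ℓ (Finset.mem_filter.2 ⟨hℓ, by simpa [hz0] using hact⟩)]
      linarith
  have hzp : Tendsto z (𝓝[>] 0) (𝓝[{z | F z = F p}] p) :=
    tendsto_nhdsWithin_iff.2 ⟨hz0 ▸ hzd.continuousAt.tendsto.mono_left nhdsWithin_le_nhds,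
      hzF.filter_mono nhdsWithin_le_nhds⟩
  obtain ⟨t, hlt, hge⟩ := (hdesc.and (hzp.eventually hmin)).exists
  simp only [hz0] at hlt
  exact hlt.not_ge hge

end Polyhedral

noncomputable def vecOfLinearMap (n : ℕ) :
    (EuclideanSpace ℝ (Fin n) →ₗ[ℝ] ℝ) →ₗ[ℝ] EuclideanSpace ℝ (Fin n) where
  toFun := vecOf
  map_add' _ _ := by ext; simp [vecOf]
  map_smul' _ _ := by ext; simp [vecOf]

theorem vecOf_evalFDeriv {n : ℕ} (f : MvPolynomial (Fin n) ℝ) (v : EuclideanSpace ℝ (Fin n)) :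
    vecOf (f.evalFDeriv v : EuclideanSpace ℝ (Fin n) →ₗ[ℝ] ℝ) = grad f v := by
  ext i
  simp [vecOf, grad, MvPolynomial.evalFDeriv_apply]

theorem grad_mem_span_activeSet {n : ℕ} {L : Finset (EuclideanSpace ℝ (Fin n) →ₗ[ℝ] ℝ)}
    (hL : L.Nonempty) {f : MvPolynomial (Fin n) ℝ} {u p : EuclideanSpace ℝ (Fin n)}
    (hp : MvPolynomial.eval (fun j => p j) f = 0) (hgrad : grad f p ≠ 0)
    (hpos : 0 < L.sup' hL fun ℓ => ℓ (u - p))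
    (hmin : ∀ z, MvPolynomial.eval (fun j => z j) f = 0 →
      (L.sup' hL fun ℓ => ℓ (u - p)) ≤ L.sup' hL fun ℓ => ℓ (u - z)) :
    grad f p ∈ Submodule.span ℝ
      (vecOf '' (activeSet L hL (u - p) : Set (EuclideanSpace ℝ (Fin n) →ₗ[ℝ] ℝ))) := by
  have hD : f.evalFDeriv p ≠ 0 := fun h0 => hgrad (by
    rw [← vecOf_evalFDeriv, h0]; exact map_zero (vecOfLinearMap n))
  have hspan := mem_span_activeSet_of_isLocalMinOn hL (f.hasStrictFDerivAt_eval p) hD hpos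
    (IsMinOn.localize fun z hz => hmin z (hz.trans hp))
  rw [← vecOf_evalFDeriv]
  exact Submodule.apply_mem_span_image_of_mem_span (vecOfLinearMap n) hspan

theorem stmt_9_general {n : ℕ}
    (L : Finset (EuclideanSpace ℝ (Fin n) →ₗ[ℝ] ℝ)) (hL : L.Nonempty)
    (hsymm : ∀ ℓ, ℓ ∈ L ↔ -ℓ ∈ L)
    (hbdd : Bornology.IsBounded {x : EuclideanSpace ℝ (Fin n) | ∀ ℓ ∈ L, ℓ x ≤ 1})
    (h : EuclideanSpace ℝ (Fin n) → ℝ)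
    (hh : ∀ x, h x = L.sup' hL fun ℓ => ℓ x)
    (f : MvPolynomial (Fin n) ℝ)
    (X : Set (EuclideanSpace ℝ (Fin n)))
    (hX : X = {x | MvPolynomial.eval (fun j => x j) f = 0})
    (hsm : ∀ x ∈ X, grad f x ≠ 0)
    (u x y : EuclideanSpace ℝ (Fin n))
    (hx : x ∈ X) (hy : y ∈ X) (hxy : x ≠ y)
    (heq : h (u - x) = h (u - y))
    (hmin : ∀ z ∈ X, h (u - x) ≤ h (u - z)) :
    0 < h (u - x) ∧
    ∃ A A' : Finset (EuclideanSpace ℝ (Fin n) →ₗ[ℝ] ℝ),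
      A ⊆ L ∧ A' ⊆ L ∧ A.Nonempty ∧ A'.Nonempty ∧
      (∀ ℓ ∈ A, ℓ (u - x) = h (u - x)) ∧
      (∀ ℓ ∈ L, ℓ (u - x) ≤ h (u - x)) ∧
      (∀ ℓ ∈ A', ℓ (u - y) = h (u - x)) ∧
      (∀ ℓ ∈ L, ℓ (u - y) ≤ h (u - x)) ∧
      grad f x ∈ Submodule.span ℝ (vecOf '' (A : Set (EuclideanSpace ℝ (Fin n) →ₗ[ℝ] ℝ))) ∧
      grad f y ∈ Submodule.span ℝ (vecOf '' (A' : Set (EuclideanSpace ℝ (Fin n) →ₗ[ℝ] ℝ))) := by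
  obtain rfl : h = fun v => L.sup' hL fun ℓ => ℓ v := funext hh
  subst hX
  beta_reduce at heq hmin ⊢
  have hpos : 0 < L.sup' hL fun ℓ => ℓ (u - x) := by
    by_contra! hnonpos
    have hux := eq_zero_of_sup'_nonpos hL hsymm hbdd hnonpos
    have huy := eq_zero_of_sup'_nonpos hL hsymm hbdd (heq ▸ hnonpos)
    exact hxy (by rw [sub_eq_zero] at hux huy; rw [← hux, ← huy])
  refine ⟨hpos, activeSet L hL (u - x), activeSet L hL (u - y), Finset.filter_subset _ _,
    Finset.filter_subset _ _, activeSet_nonempty L hL _, activeSet_nonempty L hL _,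
    fun ℓ hℓ => (Finset.mem_filter.1 hℓ).2, fun ℓ hℓ => Finset.le_sup' (fun ℓ => ℓ (u - x)) hℓ,
    fun ℓ hℓ => heq ▸ (Finset.mem_filter.1 hℓ).2,
    fun ℓ hℓ => heq ▸ Finset.le_sup' (fun ℓ => ℓ (u - y)) hℓ,
    grad_mem_span_activeSet hL hx (hsm x hx) hpos hmin,
    grad_mem_span_activeSet hL hy (hsm y hy) (heq ▸ hpos) fun z hz => heq ▸ hmin z hz⟩

/-- If `u` lies in the medial axis of the smooth hypersurface
`X = V(f)`, witnessed by distinct closest points `x, y ∈ X`, then with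
`λ = h(u - x) > 0` there are nonempty sets `A, A' ⊆ L` of active functionals at
`x` resp. `y` realizing the distance, and the gradients `∇f(x)`, `∇f(y)` lie in
the spans of the vectors representing `A` resp. `A'`; thus `(x, y, u, λ)`
satisfies the equidistance and tangency equations of an incidence variety and
`u` lies in the equidistant locus. -/
theorem stmt_9 {n : ℕ} (hn : 1 ≤ n)
    (L : Finset (EuclideanSpace ℝ (Fin n) →ₗ[ℝ] ℝ)) (hL : L.Nonempty)
    (hsymm : ∀ ℓ, ℓ ∈ L ↔ -ℓ ∈ L)
    (hbdd : Bornology.IsBounded {x : EuclideanSpace ℝ (Fin n) | ∀ ℓ ∈ L, ℓ x ≤ 1})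
    (h : EuclideanSpace ℝ (Fin n) → ℝ)
    (hh : ∀ x, h x = L.sup' hL fun ℓ => ℓ x)
    (f : MvPolynomial (Fin n) ℝ)
    (X : Set (EuclideanSpace ℝ (Fin n)))
    (hX : X = {x | MvPolynomial.eval (fun j => x j) f = 0})
    (hsm : ∀ x ∈ X, grad f x ≠ 0)
    (u x y : EuclideanSpace ℝ (Fin n))
    (hx : x ∈ X) (hy : y ∈ X) (hxy : x ≠ y)
    (heq : h (u - x) = h (u - y))
    (hmin : ∀ z ∈ X, h (u - x) ≤ h (u - z)) :
    0 < h (u - x) ∧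
    ∃ A A' : Finset (EuclideanSpace ℝ (Fin n) →ₗ[ℝ] ℝ),
      A ⊆ L ∧ A' ⊆ L ∧ A.Nonempty ∧ A'.Nonempty ∧
      (∀ ℓ ∈ A, ℓ (u - x) = h (u - x)) ∧
      (∀ ℓ ∈ L, ℓ (u - x) ≤ h (u - x)) ∧
      (∀ ℓ ∈ A', ℓ (u - y) = h (u - x)) ∧
      (∀ ℓ ∈ L, ℓ (u - y) ≤ h (u - x)) ∧
      grad f x ∈ Submodule.span ℝ (vecOf '' (A : Set (EuclideanSpace ℝ (Fin n) →ₗ[ℝ] ℝ))) ∧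
      grad f y ∈ Submodule.span ℝ (vecOf '' (A' : Set (EuclideanSpace ℝ (Fin n) →ₗ[ℝ] ℝ))) :=
  stmt_9_general L hL hsymm hbdd h hh f X hX hsm u x y hx hy hxy heq hmin
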